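/- If the set function f : 2^V → ℝ≥0 is monotone and α-weakly DR-submodular for some α ∈ (0,1], then every stationary point (p_1,…,p_K) of its Multinoulli Extension F over the domain ∏_{k=1}^K Δ_{n_k} satisfies F(p_1,…,p_K) ≥ (α²/(1+α²))·f(S) for every feasible subset S ⊆ V. -/

import Mathlib

open Finset

noncomputable section

namespace Multinoulli

variable {K : ℕ}

/-- An element of the ground set `V`: a community index `k` together with the
index `m` of the element `v_k^m` inside its community `V_k`. -/
abbrev Elem (n : Fin K → ℕ) := Σ k : Fin K, Fin (n k)

/-- A sampling slot: a community `k` together with a trial index `b ∈ {1,…,B_k}`. -/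
abbrev Slot (B : Fin K → ℕ) := Σ k : Fin K, Fin (B k)

/-- A joint outcome of all the independent multinoulli trials; `none` encodes a
draw of `∅`, which contributes no element. -/
abbrev Choice (n B : Fin K → ℕ) := ∀ s : Slot B, Option (Fin (n s.1))

/-- The probability that `Multi(p_k)` (the `k`-th block of `x`) assigns to a given
outcome: `x ⟨k,m⟩` for the element `v_k^m` and `1 - Σ_m x ⟨k,m⟩` for `∅`. -/
def prob (n : Fin K → ℕ) (x : Elem n → ℝ) (k : Fin K) : Option (Fin (n k)) → ℝ
  | some m => x ⟨k, m⟩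
  | none => 1 - ∑ m : Fin (n k), x ⟨k, m⟩

/-- The probability of the joint outcome `e` (all trials are mutually independent). -/
def jointProb (n B : Fin K → ℕ) (x : Elem n → ℝ) (e : Choice n B) : ℝ :=
  ∏ s : Slot B, prob n x s.1 (e s)

/-- The subset of the ground set selected by the trials whose slot lies in `A`
(a draw of `∅` contributes no element to the union). -/
def chosen (n B : Fin K → ℕ) (e : Choice n B) (A : Finset (Slot B)) : Finset (Elem n) :=
  A.biUnion fun s => ((e s).map fun m => (⟨s.1, m⟩ : Elem n)).toFinset

/-- The Multinoulli Extension `F` of the set function `f`: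
`F(x) = E[f(∪_{k,b} {e_k^b})]` for mutually independent `e_k^b ∼ Multi(p_k)`. -/
def ME (n B : Fin K → ℕ) (f : Finset (Elem n) → ℝ) (x : Elem n → ℝ) : ℝ :=
  ∑ e : Choice n B, f (chosen n B e Finset.univ) * jointProb n B x e

/-- The first-order partial derivative `∂G/∂x_i` at `x`. -/
def pderiv (n : Fin K → ℕ) (G : (Elem n → ℝ) → ℝ) (i : Elem n) (x : Elem n → ℝ) : ℝ :=
  deriv (fun t => G (Function.update x i t)) (x i)

/-- The gradient `∇G(x)`. -/
def grad (n : Fin K → ℕ) (G : (Elem n → ℝ) → ℝ) (x : Elem n → ℝ) : Elem n → ℝ :=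
  fun i => pderiv n G i x

/-- The second-order partial derivative `∂²G/∂x_i∂x_j` at `x`. -/
def pderiv2 (n : Fin K → ℕ) (G : (Elem n → ℝ) → ℝ) (i j : Elem n) (x : Elem n → ℝ) : ℝ :=
  pderiv n (fun y => pderiv n G j y) i x

/-- The Euclidean inner product on `∏_k ℝ^{n_k}`. -/
def inner' (n : Fin K → ℕ) (u v : Elem n → ℝ) : ℝ := ∑ i : Elem n, u i * v i

/-- Membership in the product of simplices `∏_{k=1}^K Δ_{n_k}`. -/
def InSimplex (n : Fin K → ℕ) (x : Elem n → ℝ) : Prop :=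
  (∀ i, 0 ≤ x i) ∧ ∀ k : Fin K, ∑ m : Fin (n k), x ⟨k, m⟩ ≤ 1

/-- Feasibility for the partition constraint: `|S ∩ V_k| ≤ B_k` for all `k`. -/
def Feasible (n B : Fin K → ℕ) (S : Finset (Elem n)) : Prop :=
  ∀ k : Fin K, (S.filter fun i => i.1 = k).card ≤ B k

/-- Monotonicity of a set function. -/
def MonotoneSet (n : Fin K → ℕ) (f : Finset (Elem n) → ℝ) : Prop :=
  ∀ A B : Finset (Elem n), A ⊆ B → f A ≤ f B

/-- The marginal contribution `f(v|A) = f(A ∪ {v}) - f(A)`. -/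
def marg (n : Fin K → ℕ) (f : Finset (Elem n) → ℝ) (v : Elem n) (A : Finset (Elem n)) : ℝ :=
  f (insert v A) - f A

/-- `α`-weak DR-submodularity: `f(v|A) ≥ α·f(v|B)` for all `A ⊆ B` and `v ∉ B`. -/
def WeaklyDR (n : Fin K → ℕ) (f : Finset (Elem n) → ℝ) (α : ℝ) : Prop :=
  ∀ A B : Finset (Elem n), A ⊆ B → ∀ v, v ∉ B → α * marg n f v B ≤ marg n f v A

/-- `γ`-weak submodularity from below. -/
def WeaklyBelow (n : Fin K → ℕ) (f : Finset (Elem n) → ℝ) (γ : ℝ) : Prop :=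
  ∀ A B : Finset (Elem n), A ⊆ B → γ * (f B - f A) ≤ ∑ v ∈ B \ A, marg n f v A

/-- `β`-weak submodularity from above. -/
def WeaklyAbove (n : Fin K → ℕ) (f : Finset (Elem n) → ℝ) (β : ℝ) : Prop :=
  ∀ A B : Finset (Elem n), A ⊆ B → ∑ v ∈ B \ A, marg n f v (B.erase v) ≤ β * (f B - f A)

/-- The scaled indicator vector `Σ_{k=1}^K (1/B_k)·1_{S∩V_k}`. -/
def indVec (n B : Fin K → ℕ) (S : Finset (Elem n)) : Elem n → ℝ :=
  fun i => if i ∈ S then ((B i.1 : ℝ))⁻¹ else 0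

/-!
Differentiating the multilinear expression of `F` and integrating out one trial at a time shows
that `∂F/∂x_i` is the expectation of `Σ_b f(i | R_b)`, the sum running over the trials `b` of the
community of `i` and `R_b` being the set chosen by all the other trials. Weak DR-submodularity,
telescoped over the trials, then gives `α ⟨x, ∇F(x)⟩ ≤ F(x)`; telescoped over the elements of
`S`, with the weight `1/B_k` cancelling the `B_k` trials of community `k`, it gives
`⟨y, ∇F(x)⟩ ≥ α (f(S) - F(x))` for the feasible point `y = Σ_k 1_{S ∩ V_k} / B_k`.
Stationarity `⟨y, ∇F(x)⟩ ≤ ⟨x, ∇F(x)⟩` chains the two into `α² (f(S) - F(x)) ≤ F(x)`.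
-/

theorem sum_sum_update_eq {ι M : Type*} [Fintype ι] [DecidableEq ι] {β : ι → Type*}
    [∀ i, Fintype (β i)] [AddCommMonoid M] (i : ι) (F : (∀ j, β j) → β i → M) :
    ∑ e, ∑ o, F e o = ∑ e, ∑ o, F (Function.update e i o) (e i) := by
  let σ : (∀ j, β j) × β i → (∀ j, β j) × β i := fun p => (Function.update p.1 i p.2, p.1 i)
  have hσ : Function.Involutive σ := fun p => by simp [σ]
  simp only [← Fintype.sum_prod_type']
  exact (Equiv.sum_comp (Function.Involutive.toPerm σ hσ) fun p => F p.1 p.2).symm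

section

variable {n B : Fin K → ℕ}

def chosenExcept (e : Choice n B) (s : Slot B) : Finset (Elem n) :=
  chosen n B e (univ.erase s)

def probExcept (x : Elem n → ℝ) (e : Choice n B) (s : Slot B) : ℝ :=
  ∏ s' ∈ univ.erase s, prob n x s'.1 (e s')

def probSlope (i : Elem n) (k : Fin K) : Option (Fin (n k)) → ℝ
  | some m => if (⟨k, m⟩ : Elem n) = i then 1 else 0
  | none => if k = i.1 then -1 else 0

theorem chosen_mono (e : Choice n B) {A A' : Finset (Slot B)} (h : A ⊆ A') :
    chosen n B e A ⊆ chosen n B e A' :=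
  biUnion_subset_biUnion_of_subset_left _ h

theorem chosen_of_mem (e : Choice n B) {A : Finset (Slot B)} {s : Slot B} (hs : s ∈ A) :
    chosen n B e A =
      ((e s).map fun m => (⟨s.1, m⟩ : Elem n)).toFinset ∪ chosen n B e (A.erase s) := by
  conv_lhs => rw [← insert_erase hs]
  rw [chosen, biUnion_insert]
  rfl

theorem chosen_of_eq_none {e : Choice n B} {A : Finset (Slot B)} {s : Slot B} (hs : s ∈ A)
    (h : e s = none) : chosen n B e A = chosen n B e (A.erase s) := by
  simp [chosen_of_mem e hs, h]

theorem chosen_of_eq_some {e : Choice n B} {A : Finset (Slot B)} {s : Slot B} (hs : s ∈ A)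
    {m : Fin (n s.1)} (h : e s = some m) :
    chosen n B e A = insert ⟨s.1, m⟩ (chosen n B e (A.erase s)) := by
  rw [chosen_of_mem e hs, h]
  exact (insert_eq _ _).symm

theorem chosenExcept_update (e : Choice n B) (s : Slot B) (o : Option (Fin (n s.1))) :
    chosenExcept (Function.update e s o) s = chosenExcept e s :=
  biUnion_congr rfl fun _ hs' => by rw [Function.update_of_ne (ne_of_mem_erase hs')]

theorem chosen_update_none (e : Choice n B) (s : Slot B) :
    chosen n B (Function.update e s none) univ = chosenExcept e s := by
  rw [chosen_of_eq_none (mem_univ s) (Function.update_self ..), ← chosenExcept,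
    chosenExcept_update]

theorem chosen_update_some (e : Choice n B) (s : Slot B) (m : Fin (n s.1)) :
    chosen n B (Function.update e s (some m)) univ = insert ⟨s.1, m⟩ (chosenExcept e s) := by
  rw [chosen_of_eq_some (mem_univ s) (Function.update_self ..), ← chosenExcept,
    chosenExcept_update]

theorem sum_prob (x : Elem n → ℝ) (k : Fin K) : ∑ o : Option (Fin (n k)), prob n x k o = 1 := by
  simp [Fintype.sum_option, prob]

theorem prob_mul_probExcept (x : Elem n → ℝ) (e : Choice n B) (s : Slot B) :
    prob n x s.1 (e s) * probExcept x e s = jointProb n B x e :=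
  mul_prod_erase univ (fun s' => prob n x s'.1 (e s')) (mem_univ s)

theorem probExcept_update (x : Elem n → ℝ) (e : Choice n B) (s : Slot B)
    (o : Option (Fin (n s.1))) : probExcept x (Function.update e s o) s = probExcept x e s :=
  prod_congr rfl fun _ hs' => by rw [Function.update_of_ne (ne_of_mem_erase hs')]

theorem jointProb_nonneg {x : Elem n → ℝ} (hx : InSimplex n x) (e : Choice n B) :
    0 ≤ jointProb n B x e := by
  refine prod_nonneg fun s _ => ?_
  cases e s with
  | some m => exact hx.1 ⟨s.1, m⟩
  | none => exact sub_nonneg.2 (hx.2 s.1)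

theorem sum_jointProb (x : Elem n → ℝ) : ∑ e : Choice n B, jointProb n B x e = 1 := by
  calc ∑ e : Choice n B, ∏ s, prob n x s.1 (e s)
      = ∏ s : Slot B, ∑ o, prob n x s.1 o := (Fintype.prod_sum _).symm
    _ = 1 := prod_eq_one fun s _ => sum_prob x s.1

/-- The trial in slot `s` is independent of the others, so it can be integrated out against any
weight `c`. -/
theorem sum_mul_probExcept (x : Elem n → ℝ) (s : Slot B) (c : Option (Fin (n s.1)) → ℝ)
    (G : Choice n B → ℝ) :
    ∑ e, c (e s) * probExcept x e s * G e =
      ∑ e, (∑ o, c o * G (Function.update e s o)) * jointProb n B x e := by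
  calc ∑ e, c (e s) * probExcept x e s * G e
      = ∑ e, ∑ o, c (e s) * probExcept x e s * G e * prob n x s.1 o := by
        simp only [← mul_sum, sum_prob, mul_one]
    _ = ∑ e, ∑ o, c o * G (Function.update e s o) * (prob n x s.1 (e s) * probExcept x e s) := by
        refine Eq.trans ?_ (sum_sum_update_eq s fun e o =>
          c o * G (Function.update e s o) * (prob n x s.1 (e s) * probExcept x e s)).symm
        simp only [Function.update_self, Function.update_idem, Function.update_eq_self,
          probExcept_update]
        exact sum_congr rfl fun _ _ => sum_congr rfl fun _ _ => by ring
    _ = _ := by simp only [prob_mul_probExcept, sum_mul]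

theorem sum_mul_jointProb_eq_sum_prob_mul_update (x : Elem n → ℝ) (s : Slot B)
    (G : Choice n B → ℝ) :
    ∑ e, G e * jointProb n B x e =
      ∑ e, (∑ o, prob n x s.1 o * G (Function.update e s o)) * jointProb n B x e := by
  rw [← sum_mul_probExcept]
  exact sum_congr rfl fun e _ => by rw [← prob_mul_probExcept x e s]; ring

theorem prob_update (x : Elem n → ℝ) (i : Elem n) (t : ℝ) (k : Fin K) (o : Option (Fin (n k))) :
    prob n (Function.update x i t) k o = prob n x k o + (t - x i) * probSlope i k o := by
  obtain ⟨k', m'⟩ := i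
  cases o with
  | some m =>
    by_cases h : (⟨k, m⟩ : Elem n) = ⟨k', m'⟩
    · rw [← h]; simp [prob, probSlope]
    · simp [prob, probSlope, h]
  | none =>
    by_cases h : k = k'
    · subst h
      simp only [prob, probSlope, Function.update_apply, Sigma.mk.injEq, heq_eq_eq, true_and,
        sum_ite, filter_eq', filter_ne', mem_univ, ↓reduceIte, sum_const, card_singleton, one_smul,
        sum_erase_eq_sub]
      ring
    · simp [prob, probSlope, h]

theorem sum_probSlope_mul (f : Finset (Elem n) → ℝ) (i : Elem n) (e : Choice n B) (s : Slot B) :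
    ∑ o, probSlope i s.1 o * f (chosen n B (Function.update e s o) univ) =
      if s.1 = i.1 then marg n f i (chosenExcept e s) else 0 := by
  rw [Fintype.sum_option, chosen_update_none]
  simp only [chosen_update_some]
  obtain ⟨k, m⟩ := i
  obtain ⟨k', b⟩ := s
  by_cases h : k' = k
  · subst h
    simp only [probSlope, marg, ↓reduceIte, Sigma.mk.injEq, heq_eq_eq, true_and, ite_mul,
      zero_mul, sum_ite_eq', mem_univ]
    ring
  · simp [probSlope, h]

theorem hasDerivAt_prob_update (x : Elem n → ℝ) (i : Elem n) (k : Fin K) (o : Option (Fin (n k)))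
    (t : ℝ) : HasDerivAt (fun t => prob n (Function.update x i t) k o) (probSlope i k o) t := by
  simp_rw [prob_update]
  simpa using (((hasDerivAt_id t).sub_const (x i)).mul_const (probSlope i k o)).const_add
    (prob n x k o)

theorem hasDerivAt_jointProb_update (x : Elem n → ℝ) (i : Elem n) (e : Choice n B) :
    HasDerivAt (fun t => jointProb n B (Function.update x i t) e)
      (∑ s, probExcept x e s * probSlope i s.1 (e s)) (x i) := by
  simpa [jointProb, probExcept] using
    HasDerivAt.fun_finsetProd fun s _ => hasDerivAt_prob_update x i s.1 (e s) (x i)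

theorem pderiv_ME (f : Finset (Elem n) → ℝ) (x : Elem n → ℝ) (i : Elem n) :
    pderiv n (ME n B f) i x =
      ∑ e, (∑ s with s.1 = i.1, marg n f i (chosenExcept e s)) * jointProb n B x e := by
  have hderiv : HasDerivAt (fun t => ME n B f (Function.update x i t))
      (∑ e, f (chosen n B e univ) * ∑ s, probExcept x e s * probSlope i s.1 (e s)) (x i) :=
    HasDerivAt.fun_sum fun e _ => (hasDerivAt_jointProb_update x i e).const_mul _
  rw [pderiv, hderiv.deriv]
  calc ∑ e, f (chosen n B e univ) * ∑ s, probExcept x e s * probSlope i s.1 (e s)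
      = ∑ s, ∑ e, probSlope i s.1 (e s) * probExcept x e s * f (chosen n B e univ) := by
        simp_rw [mul_sum]
        rw [sum_comm]
        exact sum_congr rfl fun s _ => sum_congr rfl fun e _ => by ring
    _ = ∑ s, ∑ e, (if s.1 = i.1 then marg n f i (chosenExcept e s) else 0) * jointProb n B x e := by
        simp_rw [sum_mul_probExcept, sum_probSlope_mul]
    _ = _ := by
        rw [sum_comm]
        simp_rw [← sum_mul, sum_filter]

theorem inner'_grad_ME (f : Finset (Elem n) → ℝ) (x y : Elem n → ℝ) :
    inner' n y (grad n (ME n B f) x) =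
      ∑ e, (∑ i, y i * ∑ s with s.1 = i.1, marg n f i (chosenExcept e s)) * jointProb n B x e := by
  simp only [inner', grad, pderiv_ME, mul_sum, sum_mul]
  rw [sum_comm]
  simp only [mul_assoc]

theorem sum_sum_filter_fst_eq (h : Elem n → Slot B → ℝ) :
    ∑ i, ∑ s with s.1 = i.1, h i s = ∑ s, ∑ m, h ⟨s.1, m⟩ s := by
  simp_rw [sum_filter]
  rw [sum_comm]
  refine sum_congr rfl fun s _ => ?_
  rw [Fintype.sum_sigma]
  simp [sum_ite_irrel, eq_comm]

theorem sum_prob_mul_chosen_update (f : Finset (Elem n) → ℝ) (x : Elem n → ℝ) (e : Choice n B)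
    (s : Slot B) :
    ∑ o, prob n x s.1 o * f (chosen n B (Function.update e s o) univ) =
      f (chosenExcept e s) + ∑ m, x ⟨s.1, m⟩ * marg n f ⟨s.1, m⟩ (chosenExcept e s) := by
  rw [Fintype.sum_option, chosen_update_none]
  simp only [chosen_update_some, prob, marg, mul_sub, sum_sub_distrib]
  rw [← sum_mul]
  ring

theorem inner'_self_grad_ME (f : Finset (Elem n) → ℝ) (x : Elem n → ℝ) :
    inner' n x (grad n (ME n B f) x) =
      ∑ s, ∑ e, (f (chosen n B e univ) - f (chosenExcept e s)) * jointProb n B x e := by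
  calc inner' n x (grad n (ME n B f) x)
      = ∑ s, ∑ e, (∑ o, prob n x s.1 o * f (chosen n B (Function.update e s o) univ) -
          f (chosenExcept e s)) * jointProb n B x e := by
        simp_rw [inner'_grad_ME, mul_sum, sum_sum_filter_fst_eq, sum_prob_mul_chosen_update,
          add_sub_cancel_left, sum_mul]
        rw [sum_comm]
    _ = _ := sum_congr rfl fun s _ => by
        simp only [sub_mul, sum_sub_distrib]
        rw [← sum_mul_jointProb_eq_sum_prob_mul_update x s fun e => f (chosen n B e univ)]

theorem MonotoneSet.marg_nonneg {f : Finset (Elem n) → ℝ} (hmono : MonotoneSet n f) (v : Elem n)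
    (A : Finset (Elem n)) : 0 ≤ marg n f v A :=
  sub_nonneg.2 (hmono _ _ (subset_insert v A))

theorem WeaklyDR.mul_marg_le {f : Finset (Elem n) → ℝ} {α : ℝ} (hDR : WeaklyDR n f α)
    (hmono : MonotoneSet n f) {A C : Finset (Elem n)} (hAC : A ⊆ C) (v : Elem n) :
    α * marg n f v C ≤ marg n f v A := by
  by_cases hv : v ∈ C
  · rw [marg, insert_eq_of_mem hv, sub_self, mul_zero]
    exact hmono.marg_nonneg v A
  · exact hDR A C hAC v hv

theorem mul_sub_le_sum_of_mul_marg_le {f : Finset (Elem n) → ℝ} {α : ℝ} (g : Elem n → ℝ)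
    (R T : Finset (Elem n)) (hg : ∀ i ∈ T, ∀ C, R ⊆ C → α * marg n f i C ≤ g i) :
    α * (f (R ∪ T) - f R) ≤ ∑ i ∈ T, g i := by
  induction T using Finset.induction_on with
  | empty => simp
  | insert j T hj ih =>
    have hstep : α * marg n f j (R ∪ T) ≤ g j := hg j (mem_insert_self j T) _ subset_union_left
    have hT := ih fun i hi => hg i (mem_insert_of_mem hi)
    rw [sum_insert hj, union_insert]
    simp only [marg] at hstep
    linarith

theorem mul_sum_sub_chosenExcept_le {f : Finset (Elem n) → ℝ} {α : ℝ} (hmono : MonotoneSet n f)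
    (hDR : WeaklyDR n f α) (e : Choice n B) (A : Finset (Slot B)) :
    α * ∑ s ∈ A, (f (chosen n B e univ) - f (chosenExcept e s)) ≤
      f (chosen n B e univ) - f (chosen n B e (univ \ A)) := by
  induction A using Finset.induction_on with
  | empty => simp
  | insert s A hs ih =>
    have hsA : s ∈ univ \ A := mem_sdiff.2 ⟨mem_univ s, hs⟩
    have hstep : α * (f (chosen n B e univ) - f (chosenExcept e s)) ≤
        f (chosen n B e (univ \ A)) - f (chosen n B e ((univ \ A).erase s)) := by
      cases h : e s with
      | none =>
        rw [chosen_of_eq_none (mem_univ s) h, chosenExcept, chosen_of_eq_none hsA h]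
        simp
      | some m =>
        rw [chosen_of_eq_some (mem_univ s) h, chosen_of_eq_some hsA h]
        exact hDR.mul_marg_le hmono
          (chosen_mono e (erase_subset_erase s (subset_univ _))) _
    rw [sum_insert hs, mul_add, sdiff_insert]
    linarith

theorem card_filter_fst_eq (k : Fin K) : #{s : Slot B | s.1 = k} = B k := by
  rw [card_filter, Fintype.sum_sigma]
  simp [apply_ite]

theorem mul_sub_le_sum_marg_chosenExcept {f : Finset (Elem n) → ℝ} {α : ℝ} (hB : ∀ k, 0 < B k)
    (hmono : MonotoneSet n f) (hDR : WeaklyDR n f α) (hα : 0 ≤ α) (e : Choice n B)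
    (S : Finset (Elem n)) :
    α * (f S - f (chosen n B e univ)) ≤
      ∑ i ∈ S, (B i.1 : ℝ)⁻¹ * ∑ s with s.1 = i.1, marg n f i (chosenExcept e s) := by
  have hg : ∀ i ∈ S, ∀ C, chosen n B e univ ⊆ C →
      α * marg n f i C ≤ (B i.1 : ℝ)⁻¹ * ∑ s with s.1 = i.1, marg n f i (chosenExcept e s) := by
    intro i _ C hC
    have hBi : (0 : ℝ) < B i.1 := by exact_mod_cast hB i.1
    calc α * marg n f i C = (B i.1 : ℝ)⁻¹ * ∑ s : Slot B with s.1 = i.1, α * marg n f i C := by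
          rw [sum_const, card_filter_fst_eq, nsmul_eq_mul]
          field_simp
      _ ≤ _ := by
          gcongr with s
          exact hDR.mul_marg_le hmono ((chosen_mono e (erase_subset s univ)).trans hC) i
  calc α * (f S - f (chosen n B e univ))
      ≤ α * (f (chosen n B e univ ∪ S) - f (chosen n B e univ)) := by
        gcongr
        exact hmono _ _ subset_union_right
    _ ≤ _ := mul_sub_le_sum_of_mul_marg_le _ _ _ hg

theorem mul_inner'_self_grad_ME_le {f : Finset (Elem n) → ℝ} {α : ℝ} (hf0 : 0 ≤ f ∅)
    (hmono : MonotoneSet n f) (hDR : WeaklyDR n f α) {x : Elem n → ℝ} (hx : InSimplex n x) :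
    α * inner' n x (grad n (ME n B f) x) ≤ ME n B f x := by
  rw [inner'_self_grad_ME, sum_comm, ME, mul_sum]
  refine sum_le_sum fun e _ => ?_
  rw [← sum_mul, ← mul_assoc]
  refine mul_le_mul_of_nonneg_right ?_ (jointProb_nonneg hx e)
  have h := mul_sum_sub_chosenExcept_le hmono hDR e univ
  have hempty : chosen n B e ∅ = ∅ := biUnion_empty
  rw [sdiff_self, bot_eq_empty, hempty] at h
  linarith

theorem mul_sub_ME_le_inner'_indVec_grad_ME {f : Finset (Elem n) → ℝ} {α : ℝ}
    (hB : ∀ k, 0 < B k) (hmono : MonotoneSet n f) (hDR : WeaklyDR n f α) (hα : 0 ≤ α)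
    {x : Elem n → ℝ} (hx : InSimplex n x) (S : Finset (Elem n)) :
    α * (f S - ME n B f x) ≤ inner' n (indVec n B S) (grad n (ME n B f) x) := by
  have hlhs : α * (f S - ME n B f x) =
      ∑ e, α * (f S - f (chosen n B e univ)) * jointProb n B x e := by
    simp only [ME, mul_sub, sub_mul, sum_sub_distrib, ← mul_sum, sum_jointProb, mul_one]
    rw [mul_sum]
    simp only [mul_assoc]
  rw [hlhs, inner'_grad_ME]
  refine sum_le_sum fun e _ => mul_le_mul_of_nonneg_right ?_ (jointProb_nonneg hx e)
  simpa only [indVec, ite_mul, zero_mul, sum_ite_mem, univ_inter] using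
    mul_sub_le_sum_marg_chosenExcept hB hmono hDR hα e S

theorem indVec_mem_simplex (hB : ∀ k, 0 < B k) {S : Finset (Elem n)} (hS : Feasible n B S) :
    InSimplex n (indVec n B S) := by
  refine ⟨fun i => ?_, fun k => ?_⟩
  · unfold indVec
    split <;> positivity
  · have hcard : #{m : Fin (n k) | (⟨k, m⟩ : Elem n) ∈ S} ≤ B k :=
      (card_le_card_of_injOn (Sigma.mk k) (fun m hm => by simp_all)
        (fun _ _ _ _ h => by simpa using h)).trans (hS k)
    have hBk : (0 : ℝ) < B k := by exact_mod_cast hB k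
    calc ∑ m, indVec n B S ⟨k, m⟩ = #{m : Fin (n k) | (⟨k, m⟩ : Elem n) ∈ S} * (B k : ℝ)⁻¹ := by
          simp [indVec, sum_ite]
      _ ≤ B k * (B k : ℝ)⁻¹ := by gcongr
      _ = 1 := mul_inv_cancel₀ hBk.ne'

end

theorem multinoulliExtension_stationary_dr_general {K : ℕ} (n B : Fin K → ℕ)
    (hB : ∀ k, 0 < B k)
    (f : Finset (Elem n) → ℝ) (hf0 : ∀ S, 0 ≤ f S)
    (hmono : MonotoneSet n f)
    (α : ℝ) (hα0 : 0 < α) (hDR : WeaklyDR n f α)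
    (x : Elem n → ℝ) (hx : InSimplex n x)
    (hstat : ∀ y : Elem n → ℝ, InSimplex n y →
      inner' n (fun i => y i - x i) (grad n (ME n B f) x) ≤ 0)
    (S : Finset (Elem n)) (hS : Feasible n B S) :
    α ^ 2 / (1 + α ^ 2) * f S ≤ ME n B f x := by
  have hstep := hstat _ (indVec_mem_simplex hB hS)
  simp only [inner', sub_mul, sum_sub_distrib, sub_nonpos] at hstep
  have hlower := mul_sub_ME_le_inner'_indVec_grad_ME hB hmono hDR hα0.le hx S
  have hupper := mul_inner'_self_grad_ME_le (B := B) (hf0 ∅) hmono hDR hx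
  have hchain : α * (α * (f S - ME n B f x)) ≤ ME n B f x :=
    (mul_le_mul_of_nonneg_left (hlower.trans hstep) hα0.le).trans hupper
  rw [div_mul_eq_mul_div, div_le_iff₀ (by positivity)]
  nlinarith

theorem multinoulliExtension_stationary_dr {K : ℕ} (n B : Fin K → ℕ) (hn : ∀ k, 1 ≤ n k)
    (hB : ∀ k, 0 < B k) (hBn : ∀ k, B k ≤ n k)
    (f : Finset (Elem n) → ℝ) (hf0 : ∀ S, 0 ≤ f S)
    (hmono : MonotoneSet n f)
    (α : ℝ) (hα0 : 0 < α) (hα1 : α ≤ 1) (hDR : WeaklyDR n f α)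
    (x : Elem n → ℝ) (hx : InSimplex n x)
    (hstat : ∀ y : Elem n → ℝ, InSimplex n y →
      inner' n (fun i => y i - x i) (grad n (ME n B f) x) ≤ 0)
    (S : Finset (Elem n)) (hS : Feasible n B S) :
    α ^ 2 / (1 + α ^ 2) * f S ≤ ME n B f x :=
  multinoulliExtension_stationary_dr_general n B hB f hf0 hmono α hα0 hDR x hx hstat S hS

end Multinoulli
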